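/- In the situation of the previous construction, if additionally A is a commutative arrow, B is a commutative (×,1)-monoid, and B is a commutative A-bimodule (the mixed strength/action square commutes), then the arrow A × B is commutative. -/

import Mathlib

open CategoryTheory MonoidalCategory

universe w v u

/-- A `Set`-valued profunctor on `C`, given by a family of sets with a dimap action. -/
structure ProfStruct (C : Type u) [Category.{v} C] (F : C → C → Type w) where
  dimap : ∀ {X X' Y Y' : C}, (X' ⟶ X) → (Y ⟶ Y') → F X Y → F X' Y'
  dimap_id : ∀ {X Y : C} (a : F X Y), dimap (𝟙 X) (𝟙 Y) a = a
  dimap_comp : ∀ {X X' X'' Y Y' Y'' : C} (f : X' ⟶ X) (f' : X'' ⟶ X')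
    (g : Y ⟶ Y') (g' : Y' ⟶ Y'') (a : F X Y),
    dimap (f' ≫ f) (g ≫ g') a = dimap f' g' (dimap f g a)

/-- A strong profunctor: a profunctor with a right strength satisfying
(di)naturality and the coherence laws w.r.t. associator and right unitor. -/
structure StrongProfStruct (C : Type u) [Category.{v} C] [MonoidalCategory C]
    (F : C → C → Type w) extends ProfStruct C F where
  st : ∀ {X Y : C} (Z : C), F X Y → F (X ⊗ Z) (Y ⊗ Z)
  st_natural : ∀ {X X' Y Y' : C} (Z : C) (f : X' ⟶ X) (g : Y ⟶ Y') (a : F X Y),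
    st Z (dimap f g a) = dimap (f ▷ Z) (g ▷ Z) (st Z a)
  st_dinatural : ∀ {X Y Z Z' : C} (h : Z ⟶ Z') (a : F X Y),
    dimap (X ◁ h) (𝟙 (Y ⊗ Z')) (st Z' a) = dimap (𝟙 (X ⊗ Z)) (Y ◁ h) (st Z a)
  st_assoc : ∀ {X Y : C} (Z Z' : C) (a : F X Y),
    dimap (α_ X Z Z').hom (α_ Y Z Z').inv (st (Z ⊗ Z') a) = st Z' (st Z a)
  st_unit : ∀ {X Y : C} (a : F X Y),
    st (𝟙_ C) a = dimap (ρ_ X).hom (ρ_ Y).inv a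

/-- An arrow on a monoidal category `C`: a monoid in strong profunctors, i.e. a
strong profunctor with `pure` and composition satisfying the arrow laws. -/
structure ArrowStruct (C : Type u) [Category.{v} C] [MonoidalCategory C]
    (F : C → C → Type w) extends StrongProfStruct C F where
  pure : ∀ {X Y : C}, (X ⟶ Y) → F X Y
  comp : ∀ {X Y Z : C}, F X Y → F Y Z → F X Z
  pure_natural : ∀ {X X' Y Y' : C} (f : X' ⟶ X) (g : Y ⟶ Y') (h : X ⟶ Y),
    dimap f g (pure h) = pure (f ≫ h ≫ g)
  comp_dimap : ∀ {X X' Y Z Z' : C} (f : X' ⟶ X) (g : Z ⟶ Z') (a : F X Y) (b : F Y Z),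
    dimap f g (comp a b) = comp (dimap f (𝟙 Y) a) (dimap (𝟙 Y) g b)
  comp_middle : ∀ {X Y Y' Z : C} (h : Y ⟶ Y') (a : F X Y) (b : F Y' Z),
    comp (dimap (𝟙 X) h a) b = comp a (dimap h (𝟙 Z) b)
  comp_assoc : ∀ {W X Y Z : C} (a : F W X) (b : F X Y) (c : F Y Z),
    comp (comp a b) c = comp a (comp b c)
  pure_comp : ∀ {X Y : C} (a : F X Y), comp (pure (𝟙 X)) a = a
  comp_pure : ∀ {X Y : C} (a : F X Y), comp a (pure (𝟙 Y)) = a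
  pure_st : ∀ {X Y : C} (Z : C) (f : X ⟶ Y), st Z (pure f) = pure (f ▷ Z)
  comp_st : ∀ {X Y Z : C} (W : C) (a : F X Y) (b : F Y Z),
    st W (comp a b) = comp (st W a) (st W b)

variable {C : Type u} [Category.{v} C] [MonoidalCategory C]

/-- The left strength induced from the right strength via the symmetry. -/
def StrongProfStruct.lst [SymmetricCategory C] {F : C → C → Type w}
    (S : StrongProfStruct C F) {X Y : C} (Z : C) (a : F X Y) : F (Z ⊗ X) (Z ⊗ Y) :=
  S.dimap (β_ Z X).hom (β_ Y Z).hom (S.st Z a)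

/-- A commutative arrow: an arrow for which the two parallel compositions,
defined via left/right strength and composition, agree. -/
structure CommArrowStruct (C : Type u) [Category.{v} C] [MonoidalCategory C]
    [SymmetricCategory C] (F : C → C → Type w) extends ArrowStruct C F where
  comm : ∀ {X Y X' Y' : C} (a : F X Y) (b : F X' Y'),
    comp (st X' a) (StrongProfStruct.lst toStrongProfStruct Y b) =
      comp (StrongProfStruct.lst toStrongProfStruct X b) (st Y' a)

/-- A (strong) bimodule over an arrow `A`: a strong profunctor `B` with left and
right actions of `A` satisfying the left-action, right-action and
commuting-actions laws, compatibly with dimaps and strengths. -/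
structure BimoduleStruct {FA : C → C → Type w} {FB : C → C → Type w}
    (A : ArrowStruct C FA) (B : StrongProfStruct C FB) where
  actL : ∀ {X Y Z : C}, FA X Y → FB Y Z → FB X Z
  actR : ∀ {X Y Z : C}, FB X Y → FA Y Z → FB X Z
  actL_dimap : ∀ {X X' Y Z Z' : C} (f : X' ⟶ X) (g : Z ⟶ Z') (a : FA X Y) (b : FB Y Z),
    B.dimap f g (actL a b) = actL (A.dimap f (𝟙 Y) a) (B.dimap (𝟙 Y) g b)
  actL_middle : ∀ {X Y Y' Z : C} (h : Y ⟶ Y') (a : FA X Y) (b : FB Y' Z),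
    actL (A.dimap (𝟙 X) h a) b = actL a (B.dimap h (𝟙 Z) b)
  actL_pure : ∀ {X Y Z : C} (f : X ⟶ Y) (b : FB Y Z), actL (A.pure f) b = B.dimap f (𝟙 Z) b
  actL_comp : ∀ {W X Y Z : C} (a : FA W X) (a' : FA X Y) (b : FB Y Z),
    actL (A.comp a a') b = actL a (actL a' b)
  actR_dimap : ∀ {X X' Y Z Z' : C} (f : X' ⟶ X) (g : Z ⟶ Z') (b : FB X Y) (a : FA Y Z),
    B.dimap f g (actR b a) = actR (B.dimap f (𝟙 Y) b) (A.dimap (𝟙 Y) g a)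
  actR_middle : ∀ {X Y Y' Z : C} (h : Y ⟶ Y') (b : FB X Y) (a : FA Y' Z),
    actR (B.dimap (𝟙 X) h b) a = actR b (A.dimap h (𝟙 Z) a)
  actR_pure : ∀ {X Y Z : C} (b : FB X Y) (g : Y ⟶ Z), actR b (A.pure g) = B.dimap (𝟙 X) g b
  actR_comp : ∀ {W X Y Z : C} (b : FB W X) (a : FA X Y) (a' : FA Y Z),
    actR b (A.comp a a') = actR (actR b a) a'
  actLR : ∀ {W X Y Z : C} (a : FA W X) (b : FB X Y) (a' : FA Y Z),
    actR (actL a b) a' = actL a (actR b a')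
  actL_st : ∀ {X Y Z : C} (W : C) (a : FA X Y) (b : FB Y Z),
    B.st W (actL a b) = actL (A.st W a) (B.st W b)
  actR_st : ∀ {X Y Z : C} (W : C) (b : FB X Y) (a : FA Y Z),
    B.st W (actR b a) = actR (B.st W b) (A.st W a)

/-- A commutative bimodule: the mixed strength/action square commutes. -/
structure CommBimoduleStruct [SymmetricCategory C] {FA FB : C → C → Type w}
    (A : ArrowStruct C FA) (B : StrongProfStruct C FB) extends BimoduleStruct A B where
  comm : ∀ {X Y X' Y' : C} (a : FA X Y) (b : FB X' Y'),
    actL (A.st X' a) (B.lst Y b) = actR (B.lst X b) (A.st Y' a)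

/-- A `(×,1)`-monoid structure on a strong profunctor, i.e. a monoid w.r.t. the
pointwise cartesian structure on strong profunctors. -/
structure MonoidProfStruct {FB : C → C → Type w} (B : StrongProfStruct C FB) where
  e : ∀ (X Y : C), FB X Y
  m : ∀ {X Y : C}, FB X Y → FB X Y → FB X Y
  e_dimap : ∀ {X X' Y Y' : C} (f : X' ⟶ X) (g : Y ⟶ Y'), B.dimap f g (e X Y) = e X' Y'
  m_dimap : ∀ {X X' Y Y' : C} (f : X' ⟶ X) (g : Y ⟶ Y') (b b' : FB X Y),
    B.dimap f g (m b b') = m (B.dimap f g b) (B.dimap f g b')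
  m_assoc : ∀ {X Y : C} (b b' b'' : FB X Y), m (m b b') b'' = m b (m b' b'')
  m_unit_left : ∀ {X Y : C} (b : FB X Y), m (e X Y) b = b
  m_unit_right : ∀ {X Y : C} (b : FB X Y), m b (e X Y) = b
  e_st : ∀ (X Y Z : C), B.st Z (e X Y) = e (X ⊗ Z) (Y ⊗ Z)
  m_st : ∀ {X Y : C} (Z : C) (b b' : FB X Y), B.st Z (m b b') = m (B.st Z b) (B.st Z b')

/-- The actions of a bimodule preserve a `(×,1)`-monoid structure. -/
structure ActionsPreserveMonoid {FA FB : C → C → Type w} {A : ArrowStruct C FA}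
    {B : StrongProfStruct C FB} (Bi : BimoduleStruct A B) (Mo : MonoidProfStruct B) : Prop where
  actL_m : ∀ {X Y Z : C} (a : FA X Y) (b b' : FB Y Z),
    Bi.actL a (Mo.m b b') = Mo.m (Bi.actL a b) (Bi.actL a b')
  actL_e : ∀ {X Y Z : C} (a : FA X Y), Bi.actL a (Mo.e Y Z) = Mo.e X Z
  actR_m : ∀ {X Y Z : C} (b b' : FB X Y) (a : FA Y Z),
    Bi.actR (Mo.m b b') a = Mo.m (Bi.actR b a) (Bi.actR b' a)
  actR_e : ∀ {X Y Z : C} (a : FA Y Z), Bi.actR (Mo.e X Y) a = Mo.e X Z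

/-!
In `A × B` the composite of `(a, b)` and `(a', b')` is `(a ≫ a', actR b a' · actL a b')`. On the
first component the commutativity square is that of `A`. On the second, each factor of one side
equals, by a mixed strength/action square of the bimodule, a factor of the other side, but the
two factors come in swapped order, so commutativity of the monoid `B` closes the square. The
second mixed square, the strength of `B` against the left strength of `A`, is the given one
conjugated by the symmetry.
-/

namespace StrongProfStruct

variable {FA FB : C → C → Type w}

def prod (A : StrongProfStruct C FA) (B : StrongProfStruct C FB) :
    StrongProfStruct C (fun X Y => FA X Y × FB X Y) where
  dimap f g p := (A.dimap f g p.1, B.dimap f g p.2)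
  dimap_id p := Prod.ext (A.dimap_id p.1) (B.dimap_id p.2)
  dimap_comp f f' g g' p := Prod.ext (A.dimap_comp f f' g g' p.1) (B.dimap_comp f f' g g' p.2)
  st Z p := (A.st Z p.1, B.st Z p.2)
  st_natural Z f g p := Prod.ext (A.st_natural Z f g p.1) (B.st_natural Z f g p.2)
  st_dinatural h p := Prod.ext (A.st_dinatural h p.1) (B.st_dinatural h p.2)
  st_assoc Z Z' p := Prod.ext (A.st_assoc Z Z' p.1) (B.st_assoc Z Z' p.2)
  st_unit p := Prod.ext (A.st_unit p.1) (B.st_unit p.2)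

end StrongProfStruct

namespace BimoduleStruct

variable {FA FB : C → C → Type w} {A : ArrowStruct C FA} {B : StrongProfStruct C FB}

def prodArrow (Bi : BimoduleStruct A B) (Mo : MonoidProfStruct B)
    (hpres : ActionsPreserveMonoid Bi Mo) :
    ArrowStruct C (fun X Y => FA X Y × FB X Y) where
  toStrongProfStruct := A.prod B
  pure f := (A.pure f, Mo.e _ _)
  comp p q := (A.comp p.1 q.1, Mo.m (Bi.actR p.2 q.1) (Bi.actL p.1 q.2))
  pure_natural f g h := Prod.ext (A.pure_natural f g h) (Mo.e_dimap f g)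
  comp_dimap f g p q := Prod.ext (A.comp_dimap f g p.1 q.1) <| by
    simp only [StrongProfStruct.prod, Mo.m_dimap, Bi.actL_dimap, Bi.actR_dimap]
  comp_middle h p q := Prod.ext (A.comp_middle h p.1 q.1) <| by
    simp only [StrongProfStruct.prod, Bi.actL_middle, Bi.actR_middle]
  comp_assoc p q r := Prod.ext (A.comp_assoc p.1 q.1 r.1) <| by
    simp only [hpres.actR_m, hpres.actL_m, Bi.actR_comp, Bi.actL_comp, Bi.actLR, Mo.m_assoc]
  pure_comp p := Prod.ext (A.pure_comp p.1) <| by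
    simp only [hpres.actR_e, Bi.actL_pure, B.dimap_id, Mo.m_unit_left]
  comp_pure p := Prod.ext (A.comp_pure p.1) <| by
    simp only [hpres.actL_e, Bi.actR_pure, B.dimap_id, Mo.m_unit_right]
  pure_st Z f := Prod.ext (A.pure_st Z f) (Mo.e_st _ _ Z)
  comp_st W p q := Prod.ext (A.comp_st W p.1 q.1) <| by
    simp only [StrongProfStruct.prod, Mo.m_st, Bi.actL_st, Bi.actR_st]

end BimoduleStruct

namespace CommBimoduleStruct

variable [SymmetricCategory C] {FA FB : C → C → Type w} {A : ArrowStruct C FA}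
  {B : StrongProfStruct C FB}

theorem actR_st_lst (Bi : CommBimoduleStruct A B) {X Y X' Y' : C} (b : FB X Y) (a : FA X' Y') :
    Bi.actR (B.st X' b) (A.lst Y a) = Bi.actL (A.lst X a) (B.st Y' b) := by
  have h := congrArg (B.dimap (β_ X X').hom (β_ Y' Y).hom) (Bi.comm a b)
  rw [Bi.actL_dimap, Bi.actR_dimap] at h
  simp only [StrongProfStruct.lst, ← B.dimap_comp, Category.id_comp, Category.comp_id,
    SymmetricCategory.symmetry] at h
  rw [← Bi.actL_middle, Bi.actR_middle] at h
  simp only [← A.dimap_comp, Category.id_comp, Category.comp_id] at h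
  exact h.symm

def prodCommArrow {A : CommArrowStruct C FA} (Bi : CommBimoduleStruct A.toArrowStruct B)
    (Mo : MonoidProfStruct B) (hMoComm : ∀ {X Y : C} (b b' : FB X Y), Mo.m b b' = Mo.m b' b)
    (hpres : ActionsPreserveMonoid Bi.toBimoduleStruct Mo) :
    CommArrowStruct C (fun X Y => FA X Y × FB X Y) where
  toArrowStruct := Bi.prodArrow Mo hpres
  comm p q := Prod.ext (A.comm p.1 q.1) <| by
    change Mo.m (Bi.actR (B.st _ p.2) (A.lst _ q.1)) (Bi.actL (A.st _ p.1) (B.lst _ q.2)) =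
      Mo.m (Bi.actR (B.lst _ q.2) (A.st _ p.1)) (Bi.actL (A.lst _ q.1) (B.st _ p.2))
    rw [Bi.comm, Bi.actR_st_lst, hMoComm]

end CommBimoduleStruct

/-- in the situation of the `A × B` construction, if `A` is a
commutative arrow, `B` is a commutative `(×,1)`-monoid and a commutative
`A`-bimodule whose actions preserve the monoid structure, then the arrow
`A × B` is commutative. -/
theorem bimodule_product_arrow_commutative {C : Type u} [Category.{v} C]
    [MonoidalCategory C] [SymmetricCategory C]
    {FA FB : C → C → Type w} (A : CommArrowStruct C FA) (B : StrongProfStruct C FB)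
    (Bi : CommBimoduleStruct A.toArrowStruct B) (Mo : MonoidProfStruct B)
    (hMoComm : ∀ {X Y : C} (b b' : FB X Y), Mo.m b b' = Mo.m b' b)
    (_hpres : ActionsPreserveMonoid Bi.toBimoduleStruct Mo) :
    ∃ S : CommArrowStruct C (fun X Y => FA X Y × FB X Y),
      (∀ {X X' Y Y' : C} (f : X' ⟶ X) (g : Y ⟶ Y') (p : FA X Y × FB X Y),
        S.dimap f g p = (A.dimap f g p.1, B.dimap f g p.2)) ∧
      (∀ {X Y : C} (Z : C) (p : FA X Y × FB X Y),
        S.st Z p = (A.st Z p.1, B.st Z p.2)) ∧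
      (∀ {X Y : C} (f : X ⟶ Y), S.pure f = (A.pure f, Mo.e X Y)) ∧
      (∀ {X Y Z : C} (p : FA X Y × FB X Y) (q : FA Y Z × FB Y Z),
        S.comp p q =
          (A.comp p.1 q.1, Mo.m (Bi.actR p.2 q.1) (Bi.actL p.1 q.2))) :=
  ⟨Bi.prodCommArrow Mo hMoComm _hpres, fun _ _ _ => rfl, fun _ _ => rfl, fun _ => rfl,
    fun _ _ => rfl⟩
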